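/- arXiv:2507.09152 — 8 statements merged into one kernel-verified Lean document; each statement's English description precedes it below -/
import Mathlib

section
/- Let f be a mechanism satisfying egalitarian-equivalence, strategy-proofness, individual rationality, and no subsidy. Then for every valuation profile v and agent i, if x_i(v)=1 then t_i(v) equals the (m+1)-th highest valuation v^{m+1}. -/
open scoped NNReal
open Finset

noncomputable section

/-- The `k`-th highest valuation (1-indexed); junk value `0` if `k` is out of range. -/
def vk (n k : ℕ) (v : Fin n → ℝ≥0) : ℝ≥0 :=
  if h : 0 < k ∧ k ≤ n then v (Tuple.sort v ⟨n - k, by omega⟩) else 0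

/-- `v ∈ Ṽ` : the `(m+1)`-th through `n`-th highest valuations are all equal. -/
def tilde (n m : ℕ) (v : Fin n → ℝ≥0) : Prop :=
  ∀ k, m + 1 ≤ k → k ≤ n → vk n k v = vk n (m + 1) v

/-- A mechanism: object assignment and transfers, allocating at most `m` objects. -/
structure Mechanism (n m : ℕ) where
  x : (Fin n → ℝ≥0) → Fin n → Bool
  t : (Fin n → ℝ≥0) → Fin n → ℝ
  feasible : ∀ v, (Finset.univ.filter fun i => x v i = true).card ≤ m

/-- Quasi-linear utility of a bundle `(x, t)` for valuation `w`. -/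
def util (z : Bool × ℝ) (w : ℝ≥0) : ℝ := (if z.1 then (w : ℝ) else 0) - z.2

def Mechanism.bundle {n m : ℕ} (f : Mechanism n m) (v : Fin n → ℝ≥0) (i : Fin n) :
    Bool × ℝ := (f.x v i, f.t v i)

def IR {n m : ℕ} (f : Mechanism n m) : Prop :=
  ∀ v i, 0 ≤ util (f.bundle v i) (v i)

def NoSubsidy {n m : ℕ} (f : Mechanism n m) : Prop :=
  ∀ v i, 0 ≤ f.t v i

def StrategyProof {n m : ℕ} (f : Mechanism n m) : Prop :=
  ∀ v (i : Fin n) (w : ℝ≥0),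
    util (f.bundle (Function.update v i w) i) (v i) ≤ util (f.bundle v i) (v i)

def EgalitarianEquivalent {n m : ℕ} (f : Mechanism n m) : Prop :=
  ∀ v, ∃ z₀ : Bool × ℝ, ∀ i, util (f.bundle v i) (v i) = util z₀ (v i)

def EnvyFree {n m : ℕ} (f : Mechanism n m) : Prop :=
  ∀ v i j, util (f.bundle v j) (v i) ≤ util (f.bundle v i) (v i)

/-- `x` maximizes total valuation among feasible object allocations. -/
def EffAlloc (n m : ℕ) (v : Fin n → ℝ≥0) (x : Fin n → Bool) : Prop :=
  ∀ y : Fin n → Bool, (Finset.univ.filter fun i => y i = true).card ≤ m →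
    (∑ i, if y i then (v i : ℝ) else 0) ≤ ∑ i, if x i then (v i : ℝ) else 0

def Efficient {n m : ℕ} (f : Mechanism n m) : Prop :=
  ∀ v, EffAlloc n m v (f.x v)

/-- Non-obvious manipulability: no report improves the sup or the inf (over others'
valuations) of an agent's utility compared to truth-telling. -/
def NOM {n m : ℕ} (f : Mechanism n m) : Prop :=
  ∀ (i : Fin n) (vi vi' : ℝ≥0),
    (⨆ w : Fin n → ℝ≥0, util (f.bundle (Function.update w i vi') i) vi) ≤
      (⨆ w : Fin n → ℝ≥0, util (f.bundle (Function.update w i vi) i) vi) ∧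
    (⨅ w : Fin n → ℝ≥0, util (f.bundle (Function.update w i vi') i) vi) ≤
      (⨅ w : Fin n → ℝ≥0, util (f.bundle (Function.update w i vi) i) vi)

/-- Winner selection function. -/
structure WSF (n m : ℕ) where
  τ : (Fin n → ℝ≥0) → Finset (Fin n)
  empty_of_not_tilde : ∀ v, ¬ tilde n m v → τ v = ∅
  mem_le : ∀ v i, i ∈ τ v → vk n (m + 1) v ≤ v i
  mem_of_lt : ∀ v, τ v ≠ ∅ → ∀ i, vk n (m + 1) v < v i → i ∈ τ v
  card_le : ∀ v, (τ v).card ≤ m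

def Uncompromising {n m : ℕ} (T : WSF n m) : Prop :=
  ∀ v (i : Fin n) (w : ℝ≥0), i ∈ T.τ v → vk n (m + 1) v < w →
    i ∈ T.τ (Function.update v i w)

/-- `f` is the `τ`-Vickrey mechanism combined with the no-trade. -/
def IsTauVickrey {n m : ℕ} (f : Mechanism n m) (T : WSF n m) : Prop :=
  ∀ v i, (f.x v i = true ↔ i ∈ T.τ v) ∧
    f.t v i = if i ∈ T.τ v then (vk n (m + 1) v : ℝ) else 0

/-- An efficient-Vickrey allocation at `v`: efficient object allocation, winners pay
the `(m+1)`-th highest valuation, losers pay nothing. -/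
def IsEVAlloc (n m : ℕ) (v : Fin n → ℝ≥0) (z : Fin n → Bool × ℝ) : Prop :=
  (Finset.univ.filter fun i => (z i).1 = true).card ≤ m ∧
  EffAlloc n m v (fun i => (z i).1) ∧
  ∀ i, (z i).2 = if (z i).1 then (vk n (m + 1) v : ℝ) else 0

/-- A pay-as-bid allocation at `v`: efficient object allocation, winners pay their
own valuation, losers pay nothing. -/
def IsPABAlloc (n m : ℕ) (v : Fin n → ℝ≥0) (z : Fin n → Bool × ℝ) : Prop :=
  (Finset.univ.filter fun i => (z i).1 = true).card ≤ m ∧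
  EffAlloc n m v (fun i => (z i).1) ∧
  ∀ i, (z i).2 = if (z i).1 then (v i : ℝ) else 0

/-- The Vickrey mechanism: winners are exactly the agents with `v i > v^{m+1}`,
winners pay `v^{m+1}`, losers get and pay nothing. -/
def IsVickrey {n m : ℕ} (f : Mechanism n m) : Prop :=
  ∀ v i, (f.x v i = true ↔ vk n (m + 1) v < v i) ∧
    f.t v i = if f.x v i then (vk n (m + 1) v : ℝ) else 0

/-- The efficient Vickrey mechanism combined with a pay-as-bid. -/
def IsEVPAB {n m : ℕ} (f : Mechanism n m) : Prop :=
  ∀ v, (tilde n m v → IsEVAlloc n m v (f.bundle v)) ∧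
    (¬ tilde n m v → IsPABAlloc n m v (f.bundle v))


section Aux
open Finset

variable {n m : ℕ}

lemma card_filter_perm' (σ : Equiv.Perm (Fin n)) (p : Fin n → Prop) [DecidablePred p] :
    (univ.filter fun j => p (σ j)).card = (univ.filter p).card := by
  rw [← Fintype.card_subtype, ← Fintype.card_subtype]
  exact Fintype.card_congr (σ.subtypeEquiv fun a => Iff.rfl)

lemma count_ge_iff (h : m < n) (g : Fin n → ℝ≥0) (hg : Monotone g)
    (s : ℝ≥0 → Prop) [DecidablePred s] (hs : ∀ ⦃a b⦄, a ≤ b → s a → s b) :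
    m + 1 ≤ (univ.filter fun j => s (g j)).card ↔ s (g ⟨n - (m+1), by omega⟩) := by
  set p : Fin n := ⟨n - (m+1), by omega⟩ with hp
  have hpv : (p : ℕ) = n - (m+1) := rfl
  constructor
  · intro hc
    by_contra hns
    have hsub : (univ.filter fun j => s (g j)) ⊆ Finset.Ioi p := by
      intro j hj
      simp only [mem_filter] at hj
      rw [Finset.mem_Ioi]
      by_contra hle
      push_neg at hle
      exact hns (hs (hg hle) hj.2)
    have hcard := Finset.card_le_card hsub
    rw [Fin.card_Ioi] at hcard
    omega
  · intro hsp
    have hsub : Finset.Ici p ⊆ univ.filter fun j => s (g j) := by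
      intro j hj
      rw [Finset.mem_Ici] at hj
      exact mem_filter.mpr ⟨mem_univ _, hs (hg hj) hsp⟩
    have hcard := Finset.card_le_card hsub
    rw [Fin.card_Ici] at hcard
    omega

lemma vk_eq_iff (h : m < n) (v : Fin n → ℝ≥0) (c : ℝ≥0) :
    vk n (m+1) v = c ↔
      ((univ.filter fun j => c < v j).card ≤ m ∧
        m + 1 ≤ (univ.filter fun j => c ≤ v j).card) := by
  have hmn : 0 < m + 1 ∧ m + 1 ≤ n := ⟨Nat.succ_pos m, h⟩
  have hvk : vk n (m+1) v = (v ∘ Tuple.sort v) ⟨n - (m+1), by omega⟩ := dif_pos hmn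
  have hg : Monotone (v ∘ Tuple.sort v) := Tuple.monotone_sort v
  have h1 := count_ge_iff h (v ∘ Tuple.sort v) hg (fun a => c ≤ a)
      (fun a b hab ha => ha.trans hab)
  have h2 := count_ge_iff h (v ∘ Tuple.sort v) hg (fun a => c < a)
      (fun a b hab ha => ha.trans_le hab)
  simp only [Function.comp_apply] at h1 h2
  rw [card_filter_perm' (Tuple.sort v) (fun j => c ≤ v j)] at h1
  rw [card_filter_perm' (Tuple.sort v) (fun j => c < v j)] at h2
  simp only [Function.comp_apply] at hvk
  rw [hvk]
  constructor
  · intro he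
    refine ⟨?_, h1.mpr he.ge⟩
    by_contra hgt
    push_neg at hgt
    have := h2.mp hgt
    simp [he] at this
  · rintro ⟨hle, hge⟩
    have hcle := h1.mp hge
    have hnlt : ¬ c < v (Tuple.sort v ⟨n - (m+1), by omega⟩) := by
      intro hc
      have := h2.mpr hc
      omega
    exact le_antisymm (not_lt.mp hnlt) hcle

lemma loser_zero (f : Mechanism n m) (hIR : IR f) (hNS : NoSubsidy f)
    (v : Fin n → ℝ≥0) (j : Fin n) (hj : f.x v j = false) : f.t v j = 0 := by
  have h1 := hIR v j
  have h2 := hNS v j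
  simp [util, Mechanism.bundle, hj] at h1
  linarith

lemma exists_loser (hmn : m < n) (f : Mechanism n m) (v : Fin n → ℝ≥0) :
    ∃ j, f.x v j = false := by
  by_contra hc
  push_neg at hc
  have hall : ∀ j : Fin n, f.x v j = true := by
    intro j
    cases hxx : f.x v j with
    | false => exact absurd hxx (hc j)
    | true => rfl
  have : (univ.filter fun i => f.x v i = true) = univ :=
    Finset.filter_true_of_mem fun j _ => hall j
  have hcard := f.feasible v
  rw [this, Finset.card_univ, Fintype.card_fin] at hcard
  omega

lemma dichotomy (hmn : m < n) (f : Mechanism n m)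
    (hEE : EgalitarianEquivalent f) (hIR : IR f) (hNS : NoSubsidy f)
    (v : Fin n → ℝ≥0) :
    (∀ j, util (f.bundle v j) (v j) = 0) ∨
    (∃ c : ℝ≥0, (∀ j, f.x v j = false → v j = c) ∧
      (∀ j, f.x v j = true → f.t v j = (c : ℝ))) := by
  obtain ⟨⟨b, t₀⟩, hz⟩ := hEE v
  obtain ⟨j₀, hj₀⟩ := exists_loser hmn f v
  have h0 : util (f.bundle v j₀) (v j₀) = 0 := by
    simp [util, Mechanism.bundle, hj₀, loser_zero f hIR hNS v j₀ hj₀]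
  cases b with
  | false =>
    left
    intro j
    have haj := hz j
    have haj₀ := hz j₀
    rw [h0] at haj₀
    simp only [util] at haj haj₀ ⊢
    simp at haj₀
    rw [haj]
    simp [haj₀]
  | true =>
    right
    have ht₀ : t₀ = (v j₀ : ℝ) := by
      have := hz j₀
      rw [h0] at this
      simp [util] at this
      linarith
    refine ⟨v j₀, ?_, ?_⟩
    · intro j hj
      have h0j : util (f.bundle v j) (v j) = 0 := by
        simp [util, Mechanism.bundle, hj, loser_zero f hIR hNS v j hj]
      have := hz j
      rw [h0j] at this
      simp [util, ht₀] at this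
      have h' : (v j : ℝ) = (v j₀ : ℝ) := by linarith
      exact_mod_cast h'
    · intro j hj
      have := hz j
      simp [util, Mechanism.bundle, hj, ht₀] at this
      linarith

lemma caseB_vk (hmn : m < n) (f : Mechanism n m) (hIR : IR f)
    (v : Fin n → ℝ≥0) (c : ℝ≥0)
    (hl : ∀ j, f.x v j = false → v j = c)
    (hw : ∀ j, f.x v j = true → f.t v j = (c : ℝ)) :
    vk n (m+1) v = c := by
  rw [vk_eq_iff hmn]
  constructor
  · have hsub : (univ.filter fun j => c < v j) ⊆ univ.filter fun i => f.x v i = true := by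
      intro j hj
      simp only [mem_filter] at hj ⊢
      refine ⟨mem_univ _, ?_⟩
      cases hxx : f.x v j with
      | false =>
        rw [hl j hxx] at hj
        exact absurd hj.2 (lt_irrefl c)
      | true => rfl
    exact (Finset.card_le_card hsub).trans (f.feasible v)
  · have hall : (univ.filter fun j => c ≤ v j) = univ := by
      refine Finset.filter_true_of_mem fun j _ => ?_
      cases hxx : f.x v j with
      | false => exact (hl j hxx).ge
      | true =>
        have h1 := hIR v j
        simp [util, Mechanism.bundle, hxx, hw j hxx] at h1
        exact_mod_cast h1
    rw [hall, Finset.card_univ, Fintype.card_fin]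
    omega

lemma win_pay_eq (f : Mechanism n m) (hSP : StrategyProof f)
    (v : Fin n → ℝ≥0) (i : Fin n) (w : ℝ≥0)
    (h1 : f.x v i = true) (h2 : f.x (Function.update v i w) i = true) :
    f.t (Function.update v i w) i = f.t v i := by
  have ha := hSP v i w
  have hb := hSP (Function.update v i w) i (v i)
  rw [Function.update_idem, Function.update_eq_self] at hb
  simp only [util, Mechanism.bundle, h1, h2, Function.update_self, if_true] at ha hb
  linarith

end Aux

/-- The class `F` of mechanisms. -/
def MemF {n m : ℕ} (f : Mechanism n m) : Prop :=
  EgalitarianEquivalent f ∧ NOM f ∧ Efficient f ∧ IR f ∧ NoSubsidy f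

theorem stmt3 (n m : ℕ) (hmn : m < n) (f : Mechanism n m)
    (hEE : EgalitarianEquivalent f) (hSP : StrategyProof f)
    (hIR : IR f) (hNS : NoSubsidy f)
    (v : Fin n → ℝ≥0) (i : Fin n) (hx : f.x v i = true) :
    f.t v i = (vk n (m + 1) v : ℝ) := by
  rcases dichotomy hmn f hEE hIR hNS v with hA | ⟨c, hl, hw⟩
  · -- all utilities zero: winner pays own value
    have ht : f.t v i = (v i : ℝ) := by
      have := hA i
      simp [util, Mechanism.bundle, hx] at this
      linarith
    set w : ℝ≥0 := v i + 1 with hwdef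
    set v' := Function.update v i w with hv'
    have hupd : Function.update v' i (v i) = v := by
      rw [hv', Function.update_idem, Function.update_eq_self]
    have hv'i : v' i = w := by rw [hv', Function.update_self]
    have hwgt : (v i : ℝ) < (w : ℝ) := by
      rw [hwdef]; push_cast; linarith
    -- i still wins at v'
    have hwin : f.x v' i = true := by
      by_contra hcx
      have hfalse : f.x v' i = false := by
        cases hxx : f.x v' i with
        | false => rfl
        | true => exact absurd hxx hcx
      have hb := hSP v' i (v i)
      rw [hupd, hv'i] at hb
      simp [util, Mechanism.bundle, hx, ht, hfalse,
        loser_zero f hIR hNS v' i hfalse] at hb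
      have hb' : (w : ℝ) ≤ (v i : ℝ) := by exact_mod_cast hb
      linarith
    have hpay : f.t v' i = (v i : ℝ) := by
      rw [← hv'] at *
      rw [win_pay_eq f hSP v i w hx hwin, ht]
    -- at v', utility of i is positive, so case B applies there
    rcases dichotomy hmn f hEE hIR hNS v' with hA' | ⟨c', hl', hw'⟩
    · exfalso
      have := hA' i
      rw [hv'i] at this
      simp [util, Mechanism.bundle, hwin, hpay] at this
      linarith
    · have hc' : c' = v i := by
        have := hw' i hwin
        rw [hpay] at this
        exact_mod_cast this.symm
      have hvk' : vk n (m+1) v' = v i := by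
        rw [← hc']
        exact caseB_vk hmn f hIR v' c' hl' hw'
      obtain ⟨hc1, hc2⟩ := (vk_eq_iff hmn v' (v i)).mp hvk'
      have hs1 : (Finset.univ.filter fun j => v i < v j)
          ⊆ Finset.univ.filter fun j => v i < v' j := by
        intro j hj
        simp only [Finset.mem_filter] at hj ⊢
        refine ⟨Finset.mem_univ _, ?_⟩
        rcases eq_or_ne j i with rfl | hne
        · exact absurd hj.2 (lt_irrefl _)
        · rw [hv', Function.update_of_ne hne]; exact hj.2
      have hs2 : (Finset.univ.filter fun j => v i ≤ v' j)
          ⊆ Finset.univ.filter fun j => v i ≤ v j := by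
        intro j hj
        simp only [Finset.mem_filter] at hj ⊢
        refine ⟨Finset.mem_univ _, ?_⟩
        rcases eq_or_ne j i with rfl | hne
        · exact le_refl _
        · rw [hv', Function.update_of_ne hne] at hj; exact hj.2
      have hvk : vk n (m+1) v = v i := by
        rw [vk_eq_iff hmn]
        exact ⟨(Finset.card_le_card hs1).trans hc1,
          hc2.trans (Finset.card_le_card hs2)⟩
      rw [ht, hvk]
  · rw [hw i hx, caseB_vk hmn f hIR v c hl hw]


end
end

section
/- Let f be a mechanism satisfying egalitarian-equivalence, strategy-proofness, individual rationality, and no subsidy. Then for every valuation profile v and agent i, if x_i(v)=1 then v_i ≥ v^{m+1} (the (m+1)-th highest valuation). -/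
open scoped NNReal
open Finset

noncomputable section

lemma exists_loser_s4 {n m : ℕ} (hmn : m < n) (v : Fin n → ℝ≥0)
    (W : Finset (Fin n)) (hW : W.card ≤ m) :
    ∃ j, j ∉ W ∧ vk n (m + 1) v ≤ v j := by
  set σ := Tuple.sort v with hσ
  let g : Fin (m + 1) → Fin n := fun k => σ ⟨n - (m + 1) + k, by omega⟩
  have hg : Function.Injective g := by
    intro a b hab
    have := σ.injective hab
    have h2 : n - (m + 1) + (a : ℕ) = n - (m + 1) + (b : ℕ) := by
      simpa [Fin.ext_iff] using this
    exact Fin.ext (by omega)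
  have hcard : (Finset.image g Finset.univ).card = m + 1 := by
    rw [Finset.card_image_of_injective _ hg, Finset.card_univ, Fintype.card_fin]
  have hns : ¬ (Finset.image g Finset.univ) ⊆ W := by
    intro h
    have := Finset.card_le_card h
    omega
  obtain ⟨j, hjS, hjW⟩ := Finset.not_subset.mp hns
  refine ⟨j, hjW, ?_⟩
  obtain ⟨k, -, rfl⟩ := Finset.mem_image.mp hjS
  have hmono := Tuple.monotone_sort v
  have hle : v (σ ⟨n - (m + 1), by omega⟩) ≤ v (g k) := by
    have : (⟨n - (m + 1), by omega⟩ : Fin n) ≤ ⟨n - (m + 1) + k, by omega⟩ := by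
      simp [Fin.le_def]
    simpa using hmono this
  rw [vk, dif_pos ⟨Nat.succ_pos m, hmn⟩]
  exact hle

lemma loser_util {n m : ℕ} (f : Mechanism n m) (hIR : IR f) (hNS : NoSubsidy f)
    (v : Fin n → ℝ≥0) (j : Fin n) (hj : f.x v j = false) :
    util (f.bundle v j) (v j) = 0 ∧ f.t v j = 0 := by
  have h1 := hIR v j
  have h2 := hNS v j
  simp only [util, Mechanism.bundle, hj, if_neg, Bool.false_eq_true, if_false] at h1 ⊢
  constructor <;> linarith

theorem stmt4 (n m : ℕ) (hmn : m < n) (f : Mechanism n m)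
    (hEE : EgalitarianEquivalent f) (hSP : StrategyProof f)
    (hIR : IR f) (hNS : NoSubsidy f)
    (v : Fin n → ℝ≥0) (i : Fin n) (hx : f.x v i = true) :
    vk n (m + 1) v ≤ v i := by
  by_contra hcon
  push_neg at hcon
  set V := vk n (m + 1) v with hV
  obtain ⟨j, hjW, hjv⟩ := exists_loser_s4 hmn v _ (f.feasible v)
  have hjx : f.x v j = false := by
    by_contra h
    exact hjW (Finset.mem_filter.mpr ⟨Finset.mem_univ j, by simpa using h⟩)
  obtain ⟨hju, hjt⟩ := loser_util f hIR hNS v j hjx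
  obtain ⟨z₀, hz⟩ := hEE v
  have hzi := hz i
  have hzj := hz j
  have hIRi := hIR v i
  simp only [util, Mechanism.bundle, hx, if_true] at hzi hIRi
  rw [hju] at hzj
  have hij : (v i : ℝ) < (V : ℝ) := by exact_mod_cast hcon
  have hjV : (V : ℝ) ≤ (v j : ℝ) := by exact_mod_cast hjv
  rcases hb : z₀.1 with _ | _
  · -- z₀ has no object : everyone has utility 0, so i pays v i
    simp only [util, hb, Bool.false_eq_true, if_false] at hzi hzj
    have hti : f.t v i = (v i : ℝ) := by linarith
    set v' := Function.update v i V with hv'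
    have hvv : Function.update v' i (v i) = v := by
      rw [hv', Function.update_idem, Function.update_eq_self]
    have hSP1 := hSP v' i (v i)
    rw [hvv] at hSP1
    have hv'i : v' i = V := by simp [hv']
    rw [hv'i] at hSP1
    simp only [util, Mechanism.bundle, hx, if_true, hti] at hSP1
    have hNSi := hNS v' i
    have hxi' : f.x v' i = true := by
      by_contra h
      have h' : f.x v' i = false := by simpa using h
      simp only [util, Mechanism.bundle, h', Bool.false_eq_true, if_false] at hSP1
      linarith
    have hti' : f.t v' i ≤ (v i : ℝ) := by
      simp only [util, Mechanism.bundle, hxi', if_true] at hSP1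
      linarith
    obtain ⟨k, hkW, hkv⟩ := exists_loser_s4 hmn v _ (f.feasible v')
    have hkV : (V : ℝ) ≤ (v k : ℝ) := by exact_mod_cast hkv
    have hki : k ≠ i := by
      intro h; rw [h] at hkV; linarith
    have hkx : f.x v' k = false := by
      by_contra h
      exact hkW (Finset.mem_filter.mpr ⟨Finset.mem_univ k, by simpa using h⟩)
    obtain ⟨hku, hkt⟩ := loser_util f hIR hNS v' k hkx
    have hv'k : v' k = v k := Function.update_of_ne hki _ _
    obtain ⟨z₁, hz1⟩ := hEE v'
    have hz1i := hz1 i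
    have hz1k := hz1 k
    rw [hku, hv'k] at hz1k
    simp only [util, Mechanism.bundle, hxi', if_true, hv'i] at hz1i
    rcases hb1 : z₁.1 with _ | _
    · simp only [util, hb1, Bool.false_eq_true, if_false] at hz1i hz1k
      linarith
    · simp only [util, hb1, if_true] at hz1i hz1k
      linarith
  · -- z₀ is an object : i gets negative utility, contradiction with IR
    simp only [util, hb, if_true] at hzi hzj
    linarith

end
end

section
/- A τ-Vickrey mechanism combined with the no-trade satisfies strategy-proofness if and only if the winner selection function τ satisfies uncompromisingness (i.e., for each profile v, each i ∈ τ(v), and each v'_i with v'_i > v^{m+1}, we have i ∈ τ(v'_i,v_{-i})). -/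
open scoped NNReal
open Finset

noncomputable section

/-!
Under the τ-Vickrey rule an agent's utility is `v i - v^{m+1}` if she wins and `0` otherwise.
A misreport can therefore only help an agent by turning a loss into a win at a price below her
value, or by lowering her price. The latter is impossible: if `i` wins at `(w, v₋ᵢ)` at price `p'`,
every agent other than `i` valued above `p'` also wins there, so at most `m` agents of `v` are
valued above `p'`, whence `v^{m+1} ≤ p'`. The former is exactly what uncompromisingness, applied
at the misreported profile, rules out; conversely a failure of uncompromisingness at `v` is a
profitable misreport `v i` for an agent with true value `w` at `(w, v₋ᵢ)`.
-/

lemma vk_succ_le_of_card_le {n k : ℕ} (hk : k < n) (v : Fin n → ℝ≥0) {c : ℝ≥0}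
    (hc : #{j | c < v j} ≤ k) : vk n (k + 1) v ≤ c := by
  by_contra! hlt
  rw [vk, dif_pos ⟨k.succ_pos, hk⟩] at hlt
  have hcard : #(Finset.Ici (⟨n - (k + 1), by omega⟩ : Fin n)) ≤ #{j | c < v j} := by
    refine Finset.card_le_card_of_injOn (Tuple.sort v) (fun t ht => ?_)
      (Tuple.sort v).injective.injOn
    simp only [Finset.coe_Ici, Set.mem_Ici, Finset.coe_filter, Finset.mem_univ, true_and,
      Set.mem_ofPred_eq] at ht ⊢
    exact hlt.trans_le (Tuple.monotone_sort v ht)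
  rw [Fin.card_Ici] at hcard
  simp only at hcard
  omega

lemma Function.update_update_apply_self {α β : Type*} [DecidableEq α] (v : α → β) (i : α)
    (w : β) : Function.update (Function.update v i w) i (v i) = v := by
  rw [Function.update_idem, Function.update_eq_self]

namespace WSF

variable {n m : ℕ} (T : WSF n m)

lemma vk_le_vk_update_of_mem (hmn : m < n) {v : Fin n → ℝ≥0} {i : Fin n} {w : ℝ≥0}
    (hi : i ∈ T.τ (Function.update v i w)) :
    vk n (m + 1) v ≤ vk n (m + 1) (Function.update v i w) := by
  refine vk_succ_le_of_card_le hmn v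
    ((Finset.card_le_card (t := T.τ (Function.update v i w)) fun j hj => ?_).trans (T.card_le _))
  rcases eq_or_ne j i with rfl | hji
  · exact hi
  · refine T.mem_of_lt _ (Finset.ne_empty_of_mem hi) j ?_
    simpa [Function.update_of_ne hji] using hj

end WSF

namespace IsTauVickrey

variable {n m : ℕ} {f : Mechanism n m} {T : WSF n m}

lemma util_bundle (hfT : IsTauVickrey f T) (v : Fin n → ℝ≥0) (i : Fin n) (w : ℝ≥0) :
    util (f.bundle v i) w = if i ∈ T.τ v then (w : ℝ) - vk n (m + 1) v else 0 := by
  obtain ⟨hx, ht⟩ := hfT v i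
  by_cases hi : i ∈ T.τ v
  · simp [util, Mechanism.bundle, hx.2 hi, ht, hi]
  · simp [util, Mechanism.bundle, mt hx.1 hi, ht, hi]

end IsTauVickrey

theorem stmt5 (n m : ℕ) (hmn : m < n) (f : Mechanism n m) (T : WSF n m)
    (hfT : IsTauVickrey f T) :
    StrategyProof f ↔ Uncompromising T := by
  constructor
  · intro hSP v i w hiv hw
    by_contra hi'
    have hdev := hSP (Function.update v i w) i (v i)
    rw [Function.update_update_apply_self, hfT.util_bundle, hfT.util_bundle, if_pos hiv,
      if_neg hi', Function.update_self] at hdev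
    have : (vk n (m + 1) v : ℝ) < w := hw
    linarith
  · intro hU v i w
    rw [hfT.util_bundle, hfT.util_bundle]
    split_ifs with hi' hi hi
    · have := T.vk_le_vk_update_of_mem hmn hi'
      simp only [sub_le_sub_iff_left, NNReal.coe_le_coe, this]
    · have hle : v i ≤ vk n (m + 1) (Function.update v i w) := by
        by_contra! hlt
        exact hi (by simpa [Function.update_update_apply_self] using hU _ i (v i) hi' hlt)
      simpa using hle
    · simpa using T.mem_le v i hi
    · exact le_rfl

end
end

section
/- Every uncompromising τ-Vickrey mechanism combined with the no-trade satisfies egalitarian-equivalence: for each valuation profile v there exists a bundle z_0 ∈ {0,1}×ℝ such that every agent is indifferent between their assigned bundle and z_0. Specifically, z_0=(0,0) works when τ(v)=∅, and z_0=(1,v^{m+1}) works when τ(v)≠∅. -/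
open scoped NNReal
open Finset

noncomputable section

lemma vk_le_of_tilde (n m : ℕ) (hmn : m < n) (v : Fin n → ℝ≥0) (ht : tilde n m v)
    (i : Fin n) : vk n (m + 1) v ≤ v i := by
  have hn : vk n n v = vk n (m + 1) v := ht n (by omega) le_rfl
  rw [← hn]
  have hmin : vk n n v = v (Tuple.sort v ⟨0, by omega⟩) := by
    simp only [vk]
    rw [dif_pos ⟨by omega, le_rfl⟩]
    simp only [Nat.sub_self]
  rw [hmin]
  have : i = Tuple.sort v ((Tuple.sort v)⁻¹ i) := by simp
  rw [this]
  haveI : NeZero n := ⟨by omega⟩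
  exact Tuple.monotone_sort v (Fin.zero_le _)

theorem stmt6 (n m : ℕ) (hmn : m < n) (f : Mechanism n m) (T : WSF n m)
    (hT : Uncompromising T) (hfT : IsTauVickrey f T) :
    ∀ v : Fin n → ℝ≥0,
      (T.τ v = ∅ → ∀ i, util (f.bundle v i) (v i) = util (false, (0 : ℝ)) (v i)) ∧
      (T.τ v ≠ ∅ → ∀ i, util (f.bundle v i) (v i)
        = util (true, (vk n (m + 1) v : ℝ)) (v i)) := by
  intro v
  constructor
  · intro hemp i
    have hx := (hfT v i).1
    have ht := (hfT v i).2
    have hni : i ∉ T.τ v := by simp [hemp]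
    have hxf : f.x v i = false := by
      rcases Bool.eq_false_or_eq_true (f.x v i) with h | h
      · exact absurd (hx.mp h) hni
      · exact h
    simp [Mechanism.bundle, util, hxf, ht, hni]
  · intro hne i
    have htil : tilde n m v := by
      by_contra hc
      exact hne (T.empty_of_not_tilde v hc)
    have hx := (hfT v i).1
    have ht := (hfT v i).2
    by_cases hi : i ∈ T.τ v
    · have hxt : f.x v i = true := hx.mpr hi
      simp [Mechanism.bundle, util, hxt, ht, hi]
    · have hxf : f.x v i = false := by
        rcases Bool.eq_false_or_eq_true (f.x v i) with h | h
        · exact absurd (hx.mp h) hi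
        · exact h
      have h1 : vk n (m + 1) v ≤ v i := vk_le_of_tilde n m hmn v htil i
      have h2 : ¬ vk n (m + 1) v < v i := fun hlt => hi (T.mem_of_lt v hne i hlt)
      have heq : v i = vk n (m + 1) v := le_antisymm (not_lt.mp h2) h1
      simp [Mechanism.bundle, util, hxf, ht, hi, heq]

end
end

section
/- Every uncompromising τ-Vickrey mechanism combined with the no-trade satisfies envy-freeness: no agent prefers another agent's bundle to their own. -/
open scoped NNReal
open Finset

noncomputable section

theorem stmt11 (n m : ℕ) (hmn : m < n) (f : Mechanism n m) (T : WSF n m)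
    (hT : Uncompromising T) (hfT : IsTauVickrey f T) :
    EnvyFree f := by
  intro v i j
  obtain ⟨hxi, hti⟩ := hfT v i
  obtain ⟨hxj, htj⟩ := hfT v j
  simp only [util, Mechanism.bundle, hti, htj]
  by_cases hi : i ∈ T.τ v
  · have hle : (vk n (m + 1) v : ℝ) ≤ (v i : ℝ) := by
      exact_mod_cast T.mem_le v i hi
    have hxi' : f.x v i = true := hxi.mpr hi
    by_cases hj : j ∈ T.τ v
    · have hxj' : f.x v j = true := hxj.mpr hj
      simp [hxi', hxj', hi, hj]
    · have hxj' : f.x v j ≠ true := fun h => hj (hxj.mp h)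
      have hb : f.x v j = false := by simpa using hxj'
      simp only [hxi', hb, if_pos hi, if_neg hj]
      norm_num
      exact_mod_cast hle
  · have hxi' : f.x v i ≠ true := fun h => hi (hxi.mp h)
    by_cases hj : j ∈ T.τ v
    · have hne : T.τ v ≠ ∅ := fun h => by simp [h] at hj
      have hle : (v i : ℝ) ≤ (vk n (m + 1) v : ℝ) := by
        by_contra h
        push_neg at h
        exact hi (T.mem_of_lt v hne i (by exact_mod_cast h))
      have hxj' : f.x v j = true := hxj.mpr hj
      have hb : f.x v i = false := by simpa using hxi'
      simp only [hxj', hb, if_pos hj, if_neg hi]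
      norm_num
      exact_mod_cast hle
    · have hxj' : f.x v j ≠ true := fun h => hj (hxj.mp h)
      simp [hxi', hxj', hi, hj]

end
end

section
/- The pay-as-bid mechanism satisfies egalitarian-equivalence (with reference bundle (0,0) for every profile), individual rationality, and no subsidy, but does not satisfy strategy-proofness. -/
open scoped NNReal
open Finset

noncomputable section

/-! Under pay-as-bid a winner pays exactly her report, so truthful reporting always yields
utility `0`, the utility of the null bundle `(false, 0)`. Shading the bid is profitable: if
only agent `i` values the objects, at `2`, she still wins with the report `1` and gains `1`. -/

lemma util_eq_zero_of_pays_value {z : Bool × ℝ} {w : ℝ≥0}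
    (hz : z.2 = if z.1 then (w : ℝ) else 0) : util z w = 0 := by
  rw [util, hz, sub_self]

namespace IsPABAlloc

variable {n m : ℕ} {v : Fin n → ℝ≥0} {z : Fin n → Bool × ℝ}

lemma util_eq_zero (h : IsPABAlloc n m v z) (i : Fin n) : util (z i) (v i) = 0 :=
  util_eq_zero_of_pays_value (h.2.2 i)

lemma transfer_nonneg (h : IsPABAlloc n m v z) (i : Fin n) : 0 ≤ (z i).2 := by
  rw [h.2.2 i]
  split <;> positivity

end IsPABAlloc

lemma EffAlloc.apply_eq_true_of_single {n m : ℕ} (hm : 0 < m) {i : Fin n} {c : ℝ≥0}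
    (hc : 0 < c) {x : Fin n → Bool} (hx : EffAlloc n m (Pi.single i c) x) : x i = true := by
  have hcard : (univ.filter fun j => decide (j = i) = true).card ≤ m := by
    simp only [decide_eq_true_eq, filter_eq', mem_univ, if_true, card_singleton]
    exact hm
  have hsum (y : Fin n → Bool) :
      (∑ j, if y j then ((Pi.single i c : Fin n → ℝ≥0) j : ℝ) else 0) =
        if y i then (c : ℝ) else 0 :=
    (Fintype.sum_eq_single i fun j hj => by simp [hj]).trans (by simp)
  have hle := hx _ hcard
  rw [hsum, hsum] at hle
  by_contra hxi
  simp only [decide_true, if_true, hxi, if_false] at hle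
  exact hle.not_gt (by exact_mod_cast hc)

theorem stmt13 (n m : ℕ) (hm : 0 < m) (hmn : m < n) (f : Mechanism n m)
    (hf : ∀ v, IsPABAlloc n m v (f.bundle v)) :
    (∀ v i, util (f.bundle v i) (v i) = util (false, (0 : ℝ)) (v i)) ∧
      IR f ∧ NoSubsidy f ∧ ¬ StrategyProof f := by
  have hutil v i : util (f.bundle v i) (v i) = 0 := (hf v).util_eq_zero i
  refine ⟨fun v i => (hutil v i).trans (by simp [util]), fun v i => (hutil v i).ge,
    fun v i => (hf v).transfer_nonneg i, fun hsp => ?_⟩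
  let i : Fin n := ⟨0, hm.trans hmn⟩
  have hreport : Function.update (Pi.single i 2) i 1 = (Pi.single i 1 : Fin n → ℝ≥0) :=
    Function.update_idem _ _ _
  have hwin : f.x (Pi.single i 1) i = true :=
    (hf (Pi.single i 1)).2.1.apply_eq_true_of_single hm one_pos
  have hpay : f.t (Pi.single i 1) i = 1 := by
    simpa [Mechanism.bundle, hwin] using (hf (Pi.single i 1)).2.2 i
  have hgain := hsp (Pi.single i 2) i 1
  rw [hutil, hreport] at hgain
  norm_num [util, Mechanism.bundle, hwin, hpay] at hgain

end
end

section
/- Let f be a mechanism satisfying egalitarian-equivalence, efficiency, individual rationality, and no subsidy, and let v be a valuation profile not in Ṽ (i.e., the (m+1)-th through n-th highest valuations are not all equal). Then f(v) is a pay-as-bid allocation: the object allocation maximizes Σ v_i·x_i, winners pay their own valuation, and losers pay nothing. -/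
open scoped NNReal
open Finset

noncomputable section

/-!
Individual rationality and no subsidy force every loser to pay nothing, and there is a loser since
`m < n`. If the reference bundle `z₀` of egalitarian-equivalence carries no object, every agent is
as well off as that loser, i.e. has utility `0`, which is pay-as-bid. If `z₀` carries an object at
price `t₀`, every loser has valuation `t₀`; by efficiency every winner values at least `t₀`, so the
`n - m` or more losers share the lowest valuation and `v ∈ Ṽ`.
-/

lemma Finset.card_filter_comp_equiv {α : Type*} [Fintype α] (e : α ≃ α) (p : α → Prop)
    [DecidablePred p] : #{a | p (e a)} = #{a | p a} := by
  simp only [Finset.card_filter]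
  exact e.sum_comp fun a => if p a then 1 else 0

lemma EffAlloc.le_of_true_of_false {n m : ℕ} {v : Fin n → ℝ≥0} {x : Fin n → Bool}
    (heff : EffAlloc n m v x) (hcard : #{i | x i = true} ≤ m)
    {i j : Fin n} (hi : x i = true) (hj : x j = false) : v j ≤ v i := by
  set σ := Equiv.swap i j
  have hij : i ≠ j := by rintro rfl; simp_all
  have hswap := heff (x ∘ σ) (by simpa [Finset.card_filter_comp_equiv σ (x · = true)])
  have hgain : ((∑ k, if (x ∘ σ) k then (v k : ℝ) else 0) - ∑ k, if x k then (v k : ℝ) else 0)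
      = v j - v i := by
    rw [← Equiv.sum_comp σ (fun k => if x k then (v k : ℝ) else 0), ← Finset.sum_sub_distrib,
      Finset.sum_eq_add_of_mem i j (mem_univ _) (mem_univ _) hij]
    · simp [σ, hi, hj]
    · rintro k - ⟨hki, hkj⟩
      simp [σ, Equiv.swap_apply_of_ne_of_ne hki hkj]
  have : (v j : ℝ) ≤ v i := by linarith
  exact_mod_cast this

lemma tilde_of_forall_le_of_card_le {n m : ℕ} (hmn : m < n) {v : Fin n → ℝ≥0} {c : ℝ≥0}
    (hge : ∀ i, c ≤ v i) (hcard : n - m ≤ #{i | v i ≤ c}) : tilde n m v := by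
  set g := Tuple.sort v
  have hmono : Monotone (v ∘ g) := Tuple.monotone_sort v
  set p : Fin n := ⟨n - (m + 1), by omega⟩
  have hp : v (g p) ≤ c := by
    have hlt : #(Iio p) < #{j | v (g j) ≤ c} := by
      rw [Fin.card_Iio, Finset.card_filter_comp_equiv g (v · ≤ c)]
      simp only [p]
      omega
    obtain ⟨j, hj, hjp⟩ := exists_mem_notMem_of_card_lt_card hlt
    simp only [mem_filter, mem_univ, true_and, mem_Iio, not_lt] at hj hjp
    exact (hmono hjp).trans hj
  intro k hmk hkn
  unfold vk
  rw [dif_pos ⟨by omega, hkn⟩, dif_pos ⟨by omega, by omega⟩]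
  exact le_antisymm (hmono (Fin.mk_le_mk.mpr (by omega))) (hp.trans (hge _))

lemma tilde_of_losers_eq {n m : ℕ} (hmn : m < n) {v : Fin n → ℝ≥0} {x : Fin n → Bool}
    (heff : EffAlloc n m v x) (hcard : #{i | x i = true} ≤ m) {j : Fin n} (hj : x j = false)
    (hlosers : ∀ i, x i = false → v i = v j) : tilde n m v := by
  refine tilde_of_forall_le_of_card_le hmn (c := v j) (fun i => ?_) ?_
  · cases hi : x i
    · exact (hlosers i hi).ge
    · exact heff.le_of_true_of_false hcard hi hj
  · have hsplit := card_filter_add_card_filter_not (s := univ) (x · = true)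
    have hle : #{i | x i = false} ≤ #{i | v i ≤ v j} :=
      card_le_card (monotone_filter_right _ fun i _ hi => (hlosers i hi).le)
    simp only [Bool.not_eq_true, card_univ, Fintype.card_fin] at hsplit
    omega

namespace Mechanism

variable {n m : ℕ} {f : Mechanism n m}

lemma t_eq_zero_of_x_eq_false (hIR : IR f) (hNS : NoSubsidy f) {v : Fin n → ℝ≥0} {i : Fin n}
    (hi : f.x v i = false) : f.t v i = 0 := by
  have := hIR v i
  simp only [util, bundle, hi, Bool.false_eq_true, if_false, zero_sub, Left.nonneg_neg_iff] at this
  exact le_antisymm this (hNS v i)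

lemma exists_x_eq_false (hmn : m < n) (f : Mechanism n m) (v : Fin n → ℝ≥0) :
    ∃ j, f.x v j = false := by
  by_contra! h
  have hall : #{i | f.x v i = true} = n := by simp [h]
  have := f.feasible v
  omega

end Mechanism

theorem stmt15 (n m : ℕ) (hmn : m < n) (f : Mechanism n m)
    (hEE : EgalitarianEquivalent f) (hEff : Efficient f)
    (hIR : IR f) (hNS : NoSubsidy f)
    (v : Fin n → ℝ≥0) (hv : ¬ tilde n m v) :
    IsPABAlloc n m v (f.bundle v) := by
  obtain ⟨⟨b, t₀⟩, hz⟩ := hEE v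
  obtain ⟨j, hj⟩ := f.exists_x_eq_false hmn v
  have hloser {i} (hi : f.x v i = false) : f.t v i = 0 := f.t_eq_zero_of_x_eq_false hIR hNS hi
  refine ⟨f.feasible v, hEff v, fun i => ?_⟩
  cases b
  · have h0 : util (f.bundle v i) (v i) = 0 := by
      rw [hz i, ← (by simp [util] : util (false, t₀) (v j) = util (false, t₀) (v i)), ← hz j]
      simp [util, Mechanism.bundle, hj, hloser hj]
    cases hi : f.x v i
    · simp [Mechanism.bundle, hi, hloser hi]
    · simp only [util, Mechanism.bundle, hi, if_true] at h0 ⊢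
      linarith
  · refine absurd (tilde_of_losers_eq hmn (hEff v) (f.feasible v) hj fun i hi => ?_) hv
    have hi' := hz i
    have hj' := hz j
    simp only [util, Mechanism.bundle, hi, hj, hloser hi, hloser hj, if_true] at hi' hj'
    have : (v i : ℝ) = v j := by simp at hi' hj'; linarith
    exact_mod_cast this

end
end

section
/- For any mechanism f satisfying efficiency, individual rationality, and no subsidy, and for any agent i with valuation v_i, the infimum over v_{-i} of u(f_i(v_i,v_{-i});v_i) equals 0. -/
open scoped NNReal
open Finset

noncomputable section

theorem stmt18 (n m : ℕ) (hmn : m < n) (f : Mechanism n m)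
    (hEff : Efficient f) (hIR : IR f) (hNS : NoSubsidy f)
    (i : Fin n) (vi : ℝ≥0) :
    (⨅ w : Fin n → ℝ≥0, util (f.bundle (Function.update w i vi) i) vi)
      = 0 := by
  have hIR' : ∀ w : Fin n → ℝ≥0,
      0 ≤ util (f.bundle (Function.update w i vi) i) vi := by
    intro w
    have := hIR (Function.update w i vi) i
    rwa [Function.update_self] at this
  have hbdd : BddBelow (Set.range fun w : Fin n → ℝ≥0 =>
      util (f.bundle (Function.update w i vi) i) vi) := by
    refine ⟨0, ?_⟩
    rintro _ ⟨w, rfl⟩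
    exact hIR' w
  -- the bad profile: everyone else has valuation vi + 1
  set v : Fin n → ℝ≥0 := Function.update (fun _ => vi + 1) i vi with hvdef
  have hvi : v i = vi := Function.update_self _ _ _
  have hvj : ∀ j, j ≠ i → v j = vi + 1 := fun j hj =>
    Function.update_of_ne hj _ _
  -- agent i does not win at v
  have hx : f.x v i = false := by
    by_contra hxi
    have hxi : f.x v i = true := by
      cases h : f.x v i
      · exact absurd h hxi
      · rfl
    -- some other agent loses
    have hj : ∃ j, j ≠ i ∧ f.x v j = false := by
      by_contra hall
      push_neg at hall
      have huniv : (Finset.univ.filter fun k => f.x v k = true) = Finset.univ := by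
        refine Finset.eq_univ_iff_forall.2 fun k => ?_
        simp only [Finset.mem_filter, Finset.mem_univ, true_and]
        by_cases hk : k = i
        · subst hk; exact hxi
        · have := hall k hk
          cases h : f.x v k
          · exact absurd h this
          · rfl
      have := f.feasible v
      rw [huniv, Finset.card_univ, Fintype.card_fin] at this
      omega
    obtain ⟨j, hji, hxj⟩ := hj
    -- swap allocation
    set y : Fin n → Bool := Function.update (Function.update (f.x v) i false) j true with hy
    have hyi : y i = false := by
      rw [hy, Function.update_of_ne (Ne.symm hji), Function.update_self]
    have hyj : y j = true := Function.update_self _ _ _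
    have hyk : ∀ k, k ≠ i → k ≠ j → y k = f.x v k := fun k hki hkj => by
      rw [hy, Function.update_of_ne hkj, Function.update_of_ne hki]
    -- cardinality
    have hcard : (Finset.univ.filter fun k => y k = true).card ≤ m := by
      have hsub : (Finset.univ.filter fun k => y k = true) ⊆
          insert j ((Finset.univ.filter fun k => f.x v k = true).erase i) := by
        intro k hk
        simp only [Finset.mem_filter, Finset.mem_univ, true_and] at hk
        by_cases hkj : k = j
        · subst hkj; exact Finset.mem_insert_self _ _
        · refine Finset.mem_insert_of_mem ?_
          have hki : k ≠ i := by
            intro h; subst h; rw [hyi] at hk; exact Bool.false_ne_true hk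
          refine Finset.mem_erase.2 ⟨hki, ?_⟩
          simp only [Finset.mem_filter, Finset.mem_univ, true_and]
          rw [← hyk k hki hkj]; exact hk
      have hiin : i ∈ (Finset.univ.filter fun k => f.x v k = true) := by
        simp only [Finset.mem_filter, Finset.mem_univ, true_and]; exact hxi
      calc (Finset.univ.filter fun k => y k = true).card
          ≤ (insert j ((Finset.univ.filter fun k => f.x v k = true).erase i)).card :=
            Finset.card_le_card hsub
        _ ≤ ((Finset.univ.filter fun k => f.x v k = true).erase i).card + 1 :=
            Finset.card_insert_le _ _
        _ = (Finset.univ.filter fun k => f.x v k = true).card - 1 + 1 := by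
            rw [Finset.card_erase_of_mem hiin]
        _ ≤ (Finset.univ.filter fun k => f.x v k = true).card := by
            have : 1 ≤ (Finset.univ.filter fun k => f.x v k = true).card :=
              Finset.card_pos.2 ⟨i, hiin⟩
            omega
        _ ≤ m := f.feasible v
    -- sum comparison
    have hle := hEff v y hcard
    -- rewrite both sums over the erased set
    have hGeq : (fun k => if y k then (v k : ℝ) else 0) =
        Function.update (Function.update (fun k => if f.x v k then (v k : ℝ) else 0)
          i 0) j ((v j : ℝ)) := by
      funext k
      by_cases hkj : k = j
      · subst hkj; rw [Function.update_self, hyj]; simp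
      · rw [Function.update_of_ne hkj]
        by_cases hki : k = i
        · subst hki; rw [Function.update_self, hyi]; simp
        · rw [Function.update_of_ne hki, hyk k hki hkj]
    rw [hGeq] at hle
    rw [Finset.sum_update_of_mem (Finset.mem_univ j),
      Finset.sdiff_singleton_eq_erase] at hle
    rw [Finset.sum_update_of_mem (Finset.mem_erase.2 ⟨Ne.symm hji, Finset.mem_univ i⟩ :
      i ∈ Finset.univ.erase j), Finset.sdiff_singleton_eq_erase] at hle
    have hsplit : (∑ k, if f.x v k then (v k : ℝ) else 0) =
        (if f.x v j then (v j : ℝ) else 0) + ((if f.x v i then (v i : ℝ) else 0) +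
          ∑ k ∈ (Finset.univ.erase j).erase i, if f.x v k then (v k : ℝ) else 0) := by
      rw [← Finset.add_sum_erase _ _ (Finset.mem_univ j)]
      rw [← Finset.add_sum_erase _ _ (Finset.mem_erase.2 ⟨(Ne.symm hji), Finset.mem_univ i⟩ : i ∈ Finset.univ.erase j)]
    rw [hsplit, hxi, hxj, hvi, hvj j hji] at hle
    simp only [if_true, if_false] at hle
    push_cast at hle
    linarith
  -- conclude: utility at v is 0
  have hutil : util (f.bundle v i) vi = 0 := by
    have h1 : util (f.bundle v i) vi ≤ 0 := by
      simp only [util, Mechanism.bundle, hx]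
      have := hNS v i
      simp only [Bool.false_eq_true, if_false]
      linarith
    have h2 : 0 ≤ util (f.bundle v i) vi := by
      have := hIR v i
      rwa [hvi] at this
    linarith
  apply le_antisymm
  · have : (⨅ w : Fin n → ℝ≥0, util (f.bundle (Function.update w i vi) i) vi) ≤
        util (f.bundle (Function.update (fun _ => vi + 1) i vi) i) vi :=
      ciInf_le hbdd _
    calc _ ≤ util (f.bundle (Function.update (fun _ => vi + 1) i vi) i) vi := this
      _ = util (f.bundle v i) vi := by rw [hvdef]
      _ = 0 := hutil
  · exact le_ciInf hIR'

end
end
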